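/- arXiv:0709.3275 — 2 statements merged into one kernel-verified Lean document; each statement's English description precedes it below -/
import Mathlib

section
/- Let q ∈ ℂ with 0 < |q| < 1, let a ∈ ℂ∖{0}, and let λ ∈ ℂ. If θ_q(a) + λ·θ_q(−a) = 0 and θ_q(aq) + λ·θ_q(−aq) = 0, then θ_q(a) = 0 (equivalently, a ∈ q^ℤ). -/
/-- The infinite q-Pochhammer symbol `(x; q)_∞ = ∏_{k=0}^{∞} (1 - x qᵏ)`. -/
noncomputable def qPochInf (q x : ℂ) : ℂ :=
  ∏' k : ℕ, (1 - x * q ^ k)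

/-- The Jacobi theta function `θ_q(z) = (q;q)_∞ (z;q)_∞ (q/z;q)_∞`. -/
noncomputable def thetaQ (q z : ℂ) : ℂ :=
  qPochInf q q * qPochInf q z * qPochInf q (q / z)

/-!
The theta function is quasi-periodic: `z θ_q(zq) = -θ_q(z)`. Multiplying the second relation by
`a` and applying this to `a` and to `-a` turns it into `-θ_q(a) + λ θ_q(-a) = 0`; subtracting it
from the first relation leaves `2 θ_q(a) = 0`.
-/

lemma multipliable_one_sub_mul_pow {q : ℂ} (hq : ‖q‖ < 1) (x : ℂ) :
    Multipliable fun k : ℕ => 1 - x * q ^ k := by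
  have hsum : Summable fun k : ℕ => ‖-(x * q ^ k)‖ := by
    simpa [norm_pow] using (summable_geometric_of_lt_one (norm_nonneg q) hq).mul_left ‖x‖
  simpa [sub_eq_add_neg] using multipliable_one_add_of_summable hsum

lemma qPochInf_eq_one_sub_mul {q : ℂ} (hq : ‖q‖ < 1) (x : ℂ) :
    qPochInf q x = (1 - x) * qPochInf q (x * q) := by
  have hshift : Multipliable fun k : ℕ => 1 - x * q ^ (k + 1) := by
    simpa only [pow_succ', mul_assoc] using multipliable_one_sub_mul_pow hq (x * q)
  have hsplit := tprod_eq_zero_mul' (f := fun k : ℕ => 1 - x * q ^ k) hshift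
  simp only [pow_zero, mul_one, pow_succ', ← mul_assoc] at hsplit
  rw [qPochInf, hsplit, qPochInf]

lemma mul_thetaQ_mul {q z : ℂ} (hq0 : q ≠ 0) (hq1 : ‖q‖ < 1) (hz : z ≠ 0) :
    z * thetaQ q (z * q) = -thetaQ q z := by
  have hz_inv : qPochInf q z⁻¹ = (1 - z⁻¹) * qPochInf q (q / z) := by
    rw [qPochInf_eq_one_sub_mul hq1, inv_mul_eq_div]
  rw [thetaQ, thetaQ, qPochInf_eq_one_sub_mul hq1 z, show q / (z * q) = z⁻¹ by field_simp,
    hz_inv]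
  field_simp
  ring

/-- If `θ_q(a) + λθ_q(-a) = 0` and `θ_q(aq) + λθ_q(-aq) = 0` then `θ_q(a) = 0`. -/
theorem thetaQ_two_term_relation_forces_zero
    (q : ℂ) (hq0 : 0 < ‖q‖) (hq1 : ‖q‖ < 1)
    (a : ℂ) (ha : a ≠ 0) (lam : ℂ)
    (h1 : thetaQ q a + lam * thetaQ q (-a) = 0)
    (h2 : thetaQ q (a * q) + lam * thetaQ q (-(a * q)) = 0) :
    thetaQ q a = 0 := by
  have hq : q ≠ 0 := norm_pos_iff.mp hq0
  have hpos : a * thetaQ q (a * q) = -thetaQ q a := mul_thetaQ_mul hq hq1 ha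
  have hneg : -a * thetaQ q (-a * q) = -thetaQ q (-a) := mul_thetaQ_mul hq hq1 (neg_ne_zero.2 ha)
  rw [← neg_mul] at h2
  have htwo : (2 : ℂ) * thetaQ q a = 0 := by
    linear_combination h1 - a * h2 + hpos - lam * hneg
  exact (mul_eq_zero.mp htwo).resolve_left two_ne_zero
end

section
/- Let q ∈ ℂ with 0 < |q| < 1 and let a ∈ ℂ∖{0}. Then the functions z ↦ θ_q(az) and z ↦ θ_q(−az) on ℂ∖{0} are linearly independent over ℂ; that is, if A, B ∈ ℂ and A·θ_q(az) + B·θ_q(−az) = 0 for all z ∈ ℂ∖{0}, then A = B = 0. -/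
section qPochInf

variable {q x : ℂ}

lemma qPochInf_one : qPochInf q 1 = 0 :=
  tprod_of_exists_eq_zero ⟨0, by simp⟩

lemma qPochInf_ne_zero (hq : ‖q‖ < 1) (h : ∀ k, x * q ^ k ≠ 1) : qPochInf q x ≠ 0 := by
  have hsum : Summable fun k : ℕ => ‖-(x * q ^ k)‖ := by
    simpa [norm_mul, norm_pow] using
      (summable_geometric_of_lt_one (norm_nonneg q) hq).mul_left ‖x‖
  have hfac : ∀ k, 1 + -(x * q ^ k) ≠ 0 := fun k => by
    rw [← sub_eq_add_neg, sub_ne_zero]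
    exact (h k).symm
  simpa only [qPochInf, ← sub_eq_add_neg] using tprod_one_add_ne_zero_of_summable hfac hsum

lemma qPochInf_ne_zero_of_norm_lt_one (hq : ‖q‖ < 1) (hx : ‖x‖ < 1) : qPochInf q x ≠ 0 := by
  refine qPochInf_ne_zero hq fun k hk => ?_
  have : ‖x * q ^ k‖ < 1 := by
    rw [norm_mul, norm_pow]
    exact (mul_le_of_le_one_right (norm_nonneg x) (pow_le_one₀ (norm_nonneg q) hq.le)).trans_lt hx
  simp [hk] at this

lemma qPochInf_neg_one_ne_zero (hq : ‖q‖ < 1) : qPochInf q (-1) ≠ 0 := by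
  refine qPochInf_ne_zero hq fun k hk => ?_
  cases k with
  | zero => norm_num at hk
  | succ k =>
    have : ‖-1 * q ^ (k + 1)‖ < 1 := by
      simpa [norm_pow] using pow_lt_one₀ (norm_nonneg q) hq k.succ_ne_zero
    simp [hk] at this

end qPochInf

lemma thetaQ_one (q : ℂ) : thetaQ q 1 = 0 := by
  simp [thetaQ, qPochInf_one]

lemma thetaQ_neg_one_ne_zero {q : ℂ} (hq : ‖q‖ < 1) : thetaQ q (-1) ≠ 0 := by
  rw [thetaQ, div_neg, div_one]
  refine mul_ne_zero (mul_ne_zero ?_ (qPochInf_neg_one_ne_zero hq)) ?_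
  · exact qPochInf_ne_zero_of_norm_lt_one hq hq
  · exact qPochInf_ne_zero_of_norm_lt_one hq (by rwa [norm_neg])

theorem thetaQ_twists_linearly_independent_general
    (q : ℂ) (hq1 : ‖q‖ < 1)
    (a : ℂ) (ha : a ≠ 0) (A B : ℂ)
    (hrel : ∀ z : ℂ, z ≠ 0 → A * thetaQ q (a * z) + B * thetaQ q (-(a * z)) = 0) :
    A = 0 ∧ B = 0 := by
  have hθ := thetaQ_neg_one_ne_zero hq1
  constructor
  · have h := hrel (-a⁻¹) (neg_ne_zero.2 (inv_ne_zero ha))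
    rwa [mul_neg, mul_inv_cancel₀ ha, neg_neg, thetaQ_one, mul_zero, add_zero,
      mul_eq_zero, or_iff_left hθ] at h
  · have h := hrel a⁻¹ (inv_ne_zero ha)
    rwa [mul_inv_cancel₀ ha, thetaQ_one, mul_zero, zero_add, mul_eq_zero, or_iff_left hθ] at h

/-- The functions `z ↦ θ_q(az)` and `z ↦ θ_q(-az)` are linearly independent over `ℂ`. -/
theorem thetaQ_twists_linearly_independent
    (q : ℂ) (hq0 : 0 < ‖q‖) (hq1 : ‖q‖ < 1)
    (a : ℂ) (ha : a ≠ 0) (A B : ℂ)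
    (hrel : ∀ z : ℂ, z ≠ 0 → A * thetaQ q (a * z) + B * thetaQ q (-(a * z)) = 0) :
    A = 0 ∧ B = 0 :=
  thetaQ_twists_linearly_independent_general q hq1 a ha A B hrel
end
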